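/- Let A, B, C be complex square matrices with A and C positive definite Hermitian, and suppose A^{-1}B = (A^{-1}B)^†. Then Y = A^{-1} # (B^† A^{-1} B + C) + A^{-1} B is a Hermitian solution of the algebraic Riccati equation Y^† A Y − B^† Y − Y^† B − C = 0. -/

import Mathlib

open Matrix
open scoped ComplexOrder

variable {n : Type*} [Fintype n] [DecidableEq n]

/-- Real power of a Hermitian matrix via the functional calculus
(junk value `0` on non-Hermitian input). For a positive definite matrix this is
the unique positive definite `r`-th power. -/
noncomputable def mpow (A : Matrix n n ℂ) (r : ℝ) : Matrix n n ℂ :=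
  if hA : A.IsHermitian then hA.cfc (fun x : ℝ => x ^ r) else 0

/-- The matrix geometric mean `A⁻¹ # C = A^{-1/2} (A^{1/2} C A^{1/2})^{1/2} A^{-1/2}`. -/
noncomputable def invGeoMean (A C : Matrix n n ℂ) : Matrix n n ℂ :=
  mpow A (-(1/2)) * mpow (mpow A (1/2) * C * mpow A (1/2)) (1/2) * mpow A (-(1/2))

lemma mpow_eq_cfc {A : Matrix n n ℂ} (hA : A.IsHermitian) (r : ℝ) :
    mpow A r = cfc (fun x : ℝ => x ^ r) A := by
  rw [mpow, dif_pos hA, hA.cfc_eq]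

lemma contOn (f : ℝ → ℝ) (A : Matrix n n ℂ) : ContinuousOn f (spectrum ℝ A) :=
  (Matrix.finite_real_spectrum (A := A)).continuousOn f

lemma spectrum_pos_of_posDef {A : Matrix n n ℂ} (hA : A.PosDef) {x : ℝ}
    (hx : x ∈ spectrum ℝ A) : 0 < x := by
  rw [hA.isHermitian.spectrum_real_eq_range_eigenvalues] at hx
  obtain ⟨i, rfl⟩ := hx
  exact hA.eigenvalues_pos i

lemma spectrum_nonneg_of_posSemidef {A : Matrix n n ℂ} (hA : A.PosSemidef) {x : ℝ}
    (hx : x ∈ spectrum ℝ A) : 0 ≤ x := by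
  rw [hA.isHermitian.spectrum_real_eq_range_eigenvalues] at hx
  obtain ⟨i, rfl⟩ := hx
  exact hA.eigenvalues_nonneg i

lemma mpow_isHermitian {A : Matrix n n ℂ} (hA : A.IsHermitian) (r : ℝ) :
    (mpow A r).IsHermitian := by
  rw [mpow_eq_cfc hA]
  exact cfc_predicate (fun x : ℝ => x ^ r) A

lemma mpow_mul_mpow {A : Matrix n n ℂ} (hA : A.PosDef) (r s : ℝ) :
    mpow A r * mpow A s = mpow A (r + s) := by
  rw [mpow_eq_cfc hA.1, mpow_eq_cfc hA.1, mpow_eq_cfc hA.1,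
    ← cfc_mul _ _ A (contOn _ A) (contOn _ A)]
  exact cfc_congr fun x hx => (Real.rpow_add (spectrum_pos_of_posDef hA hx) r s).symm

lemma mpow_zero {A : Matrix n n ℂ} (hA : A.IsHermitian) : mpow A 0 = 1 := by
  rw [mpow_eq_cfc hA]
  simp only [Real.rpow_zero]
  exact cfc_const_one ℝ A hA

lemma mpow_one {A : Matrix n n ℂ} (hA : A.IsHermitian) : mpow A 1 = A := by
  rw [mpow_eq_cfc hA]
  simp only [Real.rpow_one]
  exact cfc_id' ℝ A hA

lemma mpow_half_mul_self {M : Matrix n n ℂ} (hM : M.PosSemidef) :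
    mpow M (1/2) * mpow M (1/2) = M := by
  rw [mpow_eq_cfc hM.1, ← cfc_mul _ _ M (contOn _ M) (contOn _ M)]
  have : cfc (fun x : ℝ => x ^ (1/2 : ℝ) * x ^ (1/2 : ℝ)) M = cfc (fun x : ℝ => x) M := by
    refine cfc_congr fun x hx => ?_
    have h0 : (0:ℝ) ≤ x := spectrum_nonneg_of_posSemidef hM hx
    rw [← Real.rpow_add' h0 (by norm_num)]
    norm_num
  rw [this]
  exact cfc_id' ℝ M hM.1

set_option maxHeartbeats 1000000 in
/-- If `A` and `C` are positive definite Hermitian, and `A⁻¹ * B` is Hermitian, then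
`Y = A⁻¹ # (Bᴴ A⁻¹ B + C) + A⁻¹ B` is a Hermitian solution of the algebraic Riccati
equation `Yᴴ A Y - Bᴴ Y - Yᴴ B - C = 0`. -/
theorem riccati_hermitian_solution (A B C : Matrix n n ℂ)
    (hA : A.PosDef) (hC : C.PosDef) (hAB : A⁻¹ * B = (A⁻¹ * B)ᴴ) :
    (invGeoMean A (Bᴴ * A⁻¹ * B + C) + A⁻¹ * B).IsHermitian ∧
    (invGeoMean A (Bᴴ * A⁻¹ * B + C) + A⁻¹ * B)ᴴ * A *
        (invGeoMean A (Bᴴ * A⁻¹ * B + C) + A⁻¹ * B)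
      - Bᴴ * (invGeoMean A (Bᴴ * A⁻¹ * B + C) + A⁻¹ * B)
      - (invGeoMean A (Bᴴ * A⁻¹ * B + C) + A⁻¹ * B)ᴴ * B - C = 0 := by
  have hdet : IsUnit A.det := isUnit_iff_ne_zero.mpr hA.det_pos.ne'
  set K : Matrix n n ℂ := A⁻¹ * B with hKdef
  have hK : Kᴴ = K := hAB.symm
  have hK' : K = Bᴴ * A⁻¹ := by
    rw [hAB, conjTranspose_mul, conjTranspose_nonsing_inv, hA.1.eq]
  set D : Matrix n n ℂ := Bᴴ * A⁻¹ * B + C with hDdef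
  have hD : D.PosDef :=
    Matrix.PosDef.posSemidef_add (hA.inv.posSemidef.conjTranspose_mul_mul_same B) hC
  set H : Matrix n n ℂ := mpow A (1/2) with hHdef
  set Hinv : Matrix n n ℂ := mpow A (-(1/2)) with hHinvdef
  have hH : H.IsHermitian := mpow_isHermitian hA.1 _
  have hHinv : Hinv.IsHermitian := mpow_isHermitian hA.1 _
  have hHHinv : H * Hinv = 1 := by
    rw [hHdef, hHinvdef, mpow_mul_mpow hA]; norm_num; exact mpow_zero hA.1
  have hHinvH : Hinv * H = 1 := by
    rw [hHdef, hHinvdef, mpow_mul_mpow hA]; norm_num; exact mpow_zero hA.1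
  have hHinvAHinv : Hinv * A * Hinv = 1 := by
    have h1 := mpow_mul_mpow hA (-(1/2)) 1
    rw [mpow_one hA.1] at h1
    rw [hHinvdef, h1, mpow_mul_mpow hA]
    norm_num
    exact mpow_zero hA.1
  set M : Matrix n n ℂ := H * D * H with hMdef
  have hM : M.PosSemidef := by
    have := hD.posSemidef.mul_mul_conjTranspose_same (B := H)
    rwa [hH.eq] at this
  set S : Matrix n n ℂ := mpow M (1/2) with hSdef
  have hS : S.IsHermitian := mpow_isHermitian hM.1 _
  have hSS : S * S = M := mpow_half_mul_self hM
  have hGdef : invGeoMean A D = Hinv * S * Hinv := rfl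
  set G : Matrix n n ℂ := Hinv * S * Hinv with hG'
  have hG : G.IsHermitian := by
    rw [hG', Matrix.IsHermitian, conjTranspose_mul, conjTranspose_mul, hHinv.eq, hS.eq,
      mul_assoc]
  have hGAG : G * A * G = D := by
    have : G * A * G = Hinv * S * (Hinv * A * Hinv) * S * Hinv := by
      rw [hG']; noncomm_ring
    rw [this, hHinvAHinv, mul_one]
    have h2 : Hinv * S * S * Hinv = Hinv * (S * S) * Hinv := by noncomm_ring
    rw [h2, hSS, hMdef]
    have h3 : Hinv * (H * D * H) * Hinv = (Hinv * H) * D * (H * Hinv) := by noncomm_ring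
    rw [h3, hHinvH, hHHinv, one_mul, mul_one]
  have hAK : A * K = B := A.mul_nonsing_inv_cancel_left B hdet
  have hKA : K * A = Bᴴ := by rw [hK']; exact Matrix.nonsing_inv_mul_cancel_right A Bᴴ hdet
  rw [hGdef]
  have hY : (G + K).IsHermitian := hG.add hK
  constructor
  · exact hY
  · rw [hY.eq]
    have expand : (G + K) * A * (G + K) = G * A * G + G * A * K + (K * A * G + K * A * K) := by
      noncomm_ring
    have e2 : G * A * K = G * B := by rw [mul_assoc, hAK]
    have e3 : K * A * G = Bᴴ * G := by rw [hKA]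
    have e4 : K * A * K = Bᴴ * K := by rw [hKA]
    have e5 : Bᴴ * K = Bᴴ * A⁻¹ * B := by rw [hKdef, mul_assoc]
    have e6 : K * B = Bᴴ * A⁻¹ * B := by rw [hK']
    rw [expand, hGAG, e2, e3, e4, e5, mul_add, add_mul, e5, e6, hDdef]
    abel
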